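/- arXiv:2411.06941 — 2 statements merged into one kernel-verified Lean document; each statement's English description precedes it below -/
import Mathlib

section
/- Let G be a finite simple graph on n ≥ 1 vertices with at least one edge and let d ≥ 0 be an integer. If equality holds in the d-improper Hoffman bound, i.e. χ^d(G) = (λ₁ − λₙ)/(d − λₙ) = m, then λₙ has multiplicity at least m − 1 as an eigenvalue of the adjacency matrix of G. -/
open SimpleGraph Finset Matrix

namespace ImproperPaper

variable {V W : Type*}

/-- The strong product of two simple graphs. -/
def strongProd (G : SimpleGraph V) (H : SimpleGraph W) : SimpleGraph (V × W) where
  Adj p q := (p.1 = q.1 ∧ H.Adj p.2 q.2) ∨ (G.Adj p.1 q.1 ∧ p.2 = q.2) ∨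
    (G.Adj p.1 q.1 ∧ H.Adj p.2 q.2)
  symm := by
    constructor
    rintro ⟨a, b⟩ ⟨x, y⟩ (⟨h1, h2⟩ | ⟨h1, h2⟩ | ⟨h1, h2⟩)
    · exact Or.inl ⟨h1.symm, h2.symm⟩
    · exact Or.inr (Or.inl ⟨h1.symm, h2.symm⟩)
    · exact Or.inr (Or.inr ⟨h1.symm, h2.symm⟩)
  loopless := by
    constructor
    rintro ⟨a, b⟩ (⟨h1, h2⟩ | ⟨h1, h2⟩ | ⟨h1, h2⟩)
    · exact H.ne_of_adj h2 rfl
    · exact G.ne_of_adj h1 rfl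
    · exact G.ne_of_adj h1 rfl

/-- The lexicographical product of two simple graphs. -/
def lexProd (G : SimpleGraph V) (H : SimpleGraph W) : SimpleGraph (V × W) where
  Adj p q := G.Adj p.1 q.1 ∨ (p.1 = q.1 ∧ H.Adj p.2 q.2)
  symm := by
    constructor
    rintro ⟨a, b⟩ ⟨x, y⟩ (h | ⟨h1, h2⟩)
    · exact Or.inl h.symm
    · exact Or.inr ⟨h1.symm, h2.symm⟩
  loopless := by
    constructor
    rintro ⟨a, b⟩ (h | ⟨h1, h2⟩)
    · exact G.ne_of_adj h rfl
    · exact H.ne_of_adj h2 rfl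

instance {G : SimpleGraph V} {H : SimpleGraph W} [DecidableEq V] [DecidableEq W]
    [DecidableRel G.Adj] [DecidableRel H.Adj] : DecidableRel (strongProd G H).Adj := fun p q =>
  show Decidable ((p.1 = q.1 ∧ H.Adj p.2 q.2) ∨ (G.Adj p.1 q.1 ∧ p.2 = q.2) ∨
    (G.Adj p.1 q.1 ∧ H.Adj p.2 q.2)) from inferInstance

/-- A colouring is `d`-improper if every colour class induces a subgraph of
maximum degree at most `d`. -/
def IsImproperColoring (G : SimpleGraph V) (d : ℕ) {α : Type*} (c : V → α) : Prop :=
  ∀ v : V, ({w | G.Adj v w ∧ c w = c v} : Set V).ncard ≤ d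

/-- The `d`-improper chromatic number. -/
noncomputable def improperChromaticNumber (G : SimpleGraph V) (d : ℕ) : ℕ :=
  sInf {n | ∃ c : V → Fin n, IsImproperColoring G d c}

/-- A colouring is `t`-clustered if every monochromatic connected component has at
most `t` vertices. -/
def IsClusteredColoring (G : SimpleGraph V) (t : ℕ) {α : Type*} (c : V → α) : Prop :=
  ∀ v : V,
    ({w | Relation.ReflTransGen (fun a b => G.Adj a b ∧ c a = c b) v w} : Set V).ncard ≤ t

/-- The `t`-clustered chromatic number. -/
noncomputable def clusteredChromaticNumber (G : SimpleGraph V) (t : ℕ) : ℕ :=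
  sInf {n | ∃ c : V → Fin n, IsClusteredColoring G t c}

/-- The chromatic number: least `n` admitting a proper colouring with `n` colours. -/
noncomputable def chromNum (G : SimpleGraph V) : ℕ :=
  sInf {n | ∃ c : V → Fin n, ∀ u v, G.Adj u v → c u ≠ c v}

/-- The `b`-fold `d`-improper chromatic number: least number of colours in an assignment
of `b` colours to each vertex such that, for every colour `x`, the set of vertices whose
colour set contains `x` induces a subgraph of maximum degree at most `d`. -/
noncomputable def bFoldImproperChromaticNumber (G : SimpleGraph V) (b d : ℕ) : ℕ :=
  sInf {n | ∃ c : V → Finset (Fin n), (∀ v, (c v).card = b) ∧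
    ∀ v : V, ∀ x ∈ c v, ({w | G.Adj v w ∧ x ∈ c w} : Set V).ncard ≤ d}

/-- The (proper) `b`-fold chromatic number. -/
noncomputable def bFoldChromaticNumber (G : SimpleGraph V) (b : ℕ) : ℕ :=
  bFoldImproperChromaticNumber G b 0

/-- The `b`-fold `t`-clustered chromatic number. -/
noncomputable def bFoldClusteredChromaticNumber (G : SimpleGraph V) (b t : ℕ) : ℕ :=
  sInf {n | ∃ c : V → Finset (Fin n), (∀ v, (c v).card = b) ∧
    ∀ x : Fin n, ∀ v : V, x ∈ c v →
      ({w | Relation.ReflTransGen (fun a b' => G.Adj a b' ∧ x ∈ c a ∧ x ∈ c b') v w} :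
        Set V).ncard ≤ t}

/-- The fractional chromatic number `χ_f(G) = inf { χ_b(G)/b : b ≥ 1 }`. -/
noncomputable def fracChromaticNumber (G : SimpleGraph V) : ℝ :=
  sInf {x : ℝ | ∃ b : ℕ, 0 < b ∧ x = (bFoldChromaticNumber G b : ℝ) / b}

/-- The fractional `d`-improper chromatic number. -/
noncomputable def fracImproperChromaticNumber (G : SimpleGraph V) (d : ℕ) : ℝ :=
  sInf {x : ℝ | ∃ b : ℕ, 0 < b ∧ x = (bFoldImproperChromaticNumber G b d : ℝ) / b}

/-- The fractional `t`-clustered chromatic number. -/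
noncomputable def fracClusteredChromaticNumber (G : SimpleGraph V) (t : ℕ) : ℝ :=
  sInf {x : ℝ | ∃ b : ℕ, 0 < b ∧ x = (bFoldClusteredChromaticNumber G b t : ℝ) / b}

/-- `lam` lists the eigenvalues of the Hermitian matrix `A` (with multiplicity) in
non-increasing order. -/
def IsEigList {n : ℕ} {A : Matrix (Fin n) (Fin n) ℝ} (hA : A.IsHermitian)
    (lam : Fin n → ℝ) : Prop :=
  Antitone lam ∧ ∃ σ : Equiv.Perm (Fin n), lam = hA.eigenvalues ∘ σ

/-- The largest size of a vertex subset inducing a subgraph of maximum degree at most `d`. -/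
noncomputable def maxImproperIndep (G : SimpleGraph V) (d : ℕ) : ℕ :=
  sSup {k | ∃ s : Set V, s.ncard = k ∧ ∀ v ∈ s, ({w | w ∈ s ∧ G.Adj v w} : Set V).ncard ≤ d}

end ImproperPaper

/-!
Let `A` be the adjacency matrix, `A x = λ₁ x`, let `c` be a `d`-improper colouring with `m`
classes and `xₖ` the restriction of `x` to the `k`-th class, and write `Q(v) = vᵀ(A - λₙ)v`,
a positive semidefinite form. Expanding gives `∑ₖ Q(x - m xₖ) = m² ∑ₖ Q(xₖ) - m Q(x)`. Since
every class induces maximum degree at most `d`, `Q(xₖ) ≤ (d - λₙ)|xₖ|²`, and equality in the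
Hoffman bound, `λ₁ - λₙ = m (d - λₙ)`, makes the right-hand side at most `0`. Hence every
`x - m xₖ` lies in the `λₙ`-eigenspace. Every class meets the support of `x` (otherwise `x`
itself would be a `λₙ`-eigenvector), and then any `m - 1` of these vectors are linearly
independent.
-/

lemma Matrix.sum_dotProduct_mulVec_sub_card_smul {R n κ : Type*} [CommRing R] [Fintype n]
    [Fintype κ] (B : Matrix n n R) (y : κ → n → R) :
    ∑ k, (∑ j, y j - (Fintype.card κ : R) • y k) ⬝ᵥ
        B *ᵥ (∑ j, y j - (Fintype.card κ : R) • y k) =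
      (Fintype.card κ : R) ^ 2 * ∑ k, y k ⬝ᵥ B *ᵥ y k -
        Fintype.card κ * ((∑ j, y j) ⬝ᵥ B *ᵥ ∑ j, y j) := by
  simp only [mulVec_sub, mulVec_smul, dotProduct_sub, sub_dotProduct, dotProduct_smul,
    smul_dotProduct, smul_eq_mul, sum_sub_distrib, ← mul_sum, sum_const, card_univ,
    nsmul_eq_mul, ← dotProduct_sum, ← sum_dotProduct, ← mulVec_sum]
  ring

lemma linearIndependent_sub_card_smul_indicator {V κ K : Type*} [Fintype κ] [Field K]
    [CharZero K] (c : V → κ) (x : V → K) (hx : ∀ k, ∃ v, c v = k ∧ x v ≠ 0) (z : κ) :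
    LinearIndependent K
      (fun k : {k // k ≠ z} => x - (Fintype.card κ : K) • {v | c v = k}.indicator x) := by
  classical
  rw [Fintype.linearIndependent_iff]
  intro g hg
  -- evaluate the relation at a vertex of class `j` where `x` does not vanish
  have key : ∀ j : κ,
      ∑ i, g i = Fintype.card κ * ∑ i : {k // k ≠ z}, if j = i then g i else 0 := by
    intro j
    obtain ⟨v, rfl, hv⟩ := hx j
    have hgv := congrFun hg v
    simp only [Finset.sum_apply, Pi.smul_apply, Pi.sub_apply, Set.indicator_apply,
      Set.mem_ofPred_eq, smul_eq_mul, Pi.zero_apply] at hgv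
    have expand : (∑ i, g i - Fintype.card κ * ∑ i : {k // k ≠ z},
        if c v = i then g i else 0) * x v = ∑ i, g i * (x v - Fintype.card κ *
          if c v = i then x v else 0) := by
      rw [sub_mul, sum_mul, mul_assoc, sum_mul, mul_sum, ← sum_sub_distrib]
      refine sum_congr rfl fun i _ => ?_
      split_ifs <;> ring
    apply mul_right_cancel₀ hv
    linear_combination expand.trans hgv
  have : Nonempty κ := ⟨z⟩
  have hsum : ∑ i, g i = 0 := by simpa [fun i : {k // k ≠ z} => (i.2).symm] using key z
  intro i
  simpa [hsum, Subtype.val_inj] using key i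

namespace Matrix.IsHermitian

variable {n : Type*} [Fintype n] [DecidableEq n] {A : Matrix n n ℝ} {μ : ℝ}

lemma posSemidef_sub_smul_one (hA : A.IsHermitian) (h : ∀ i, μ ≤ hA.eigenvalues i) :
    (A - μ • 1).PosSemidef := by
  refine posSemidef_iff_isHermitian_and_spectrum_nonneg.mpr
    ⟨hA.sub (isHermitian_one.smul (IsSelfAdjoint.all μ)), ?_⟩
  rw [← Algebra.algebraMap_eq_smul_one, ← spectrum.sub_singleton_eq,
    hA.spectrum_real_eq_range_eigenvalues]
  rintro _ ⟨_, ⟨i, rfl⟩, _, rfl, rfl⟩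
  simpa using h i

lemma card_le_card_filter_eigenvalues_eq (hA : A.IsHermitian) {ι : Type*} [Fintype ι]
    {u : ι → n → ℝ} (hu : LinearIndependent ℝ u) (hAu : ∀ k, A *ᵥ u k = μ • u k) :
    Fintype.card ι ≤ #{i | hA.eigenvalues i = μ} := by
  have hT := isSymmetric_toEuclideanLin_iff.mpr hA
  have hcard : #{i | hA.eigenvalues i = μ} =
      Module.finrank ℝ (Module.End.eigenspace (toEuclideanLin A) μ) := by
    rw [← hT.card_filter_eigenvalues_eq finrank_euclideanSpace]
    exact Finset.card_equiv (Fintype.equivOfCardEq (Fintype.card_fin _)).symm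
      fun _ => by simp; rfl
  let v : ι → Module.End.eigenspace (toEuclideanLin A) μ := fun k =>
    ⟨WithLp.toLp 2 (u k), by simp [toLpLin_toLp, hAu]⟩
  have hv : LinearIndependent ℝ v :=
    .of_comp (Submodule.subtype _) (hu.map' (WithLp.linearEquiv 2 ℝ (n → ℝ)).symm.toLinearMap
      (LinearEquiv.ker _))
  exact hcard ▸ hv.fintype_card_le_finrank

end Matrix.IsHermitian

lemma SimpleGraph.dotProduct_mulVec_adjMatrix_le {V : Type*} [Fintype V] (G : SimpleGraph V)
    [DecidableRel G.Adj] {d : ℕ} {y : V → ℝ}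
    (hy : ∀ v, y v ≠ 0 → #{w | G.Adj v w ∧ y w ≠ 0} ≤ d) :
    y ⬝ᵥ G.adjMatrix ℝ *ᵥ y ≤ d * (y ⬝ᵥ y) := by
  -- the second summand is written with `G.Adj w v` so that swapping the order of
  -- summation turns it into the first
  have amgm : ∀ v w, (if G.Adj v w then y v * y w else 0) ≤
      ((if G.Adj v w ∧ y w ≠ 0 then y v ^ 2 else 0) +
        (if G.Adj w v ∧ y v ≠ 0 then y w ^ 2 else 0)) / 2 := by
    intro v w
    by_cases hvw : G.Adj v w
    · by_cases hv : y v = 0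
      · simp [hvw, hv]
      by_cases hw : y w = 0
      · simp [hvw, hw]
      simp only [hvw, hvw.symm, ne_eq, hv, hw, not_false_eq_true, and_self, if_true]
      nlinarith [sq_nonneg (y v - y w)]
    · simp [hvw, G.adj_comm w v]
  calc y ⬝ᵥ G.adjMatrix ℝ *ᵥ y
      ≤ ∑ v, ∑ w, ((if G.Adj v w ∧ y w ≠ 0 then y v ^ 2 else 0) +
          (if G.Adj w v ∧ y v ≠ 0 then y w ^ 2 else 0)) / 2 := by
        rw [dotProduct_mulVec_adjMatrix]
        exact sum_le_sum fun v _ => sum_le_sum fun w _ => amgm v w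
    _ = ∑ v, #{w | G.Adj v w ∧ y w ≠ 0} * y v ^ 2 := by
        simp only [← sum_div, sum_add_distrib]
        rw [sum_comm (f := fun v w => if G.Adj w v ∧ y v ≠ 0 then y w ^ 2 else 0)]
        simp [sum_ite, sum_const]
    _ ≤ ∑ v, d * y v ^ 2 := by
        refine sum_le_sum fun v _ => ?_
        by_cases hv : y v = 0
        · simp [hv]
        · exact mul_le_mul_of_nonneg_right (by exact_mod_cast hy v hv) (sq_nonneg _)
    _ = d * (y ⬝ᵥ y) := by simp [dotProduct, mul_sum, sq]

namespace ImproperPaper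

lemma exists_improperColoring_improperChromaticNumber {V : Type*} [Finite V]
    (G : SimpleGraph V) (d : ℕ) :
    ∃ c : V → Fin (improperChromaticNumber G d), IsImproperColoring G d c := by
  refine Nat.sInf_mem (s := {k | ∃ c : V → Fin k, IsImproperColoring G d c})
    ⟨Nat.card V, Finite.equivFin V, fun v => ?_⟩
  have hempty : {w | G.Adj v w ∧ Finite.equivFin V w = Finite.equivFin V v} = ∅ :=
    Set.eq_empty_of_forall_notMem fun w ⟨h, hw⟩ =>
      G.ne_of_adj h ((Finite.equivFin V).injective hw).symm
  rw [hempty, Set.ncard_empty]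
  exact d.zero_le

namespace IsImproperColoring

variable {V κ : Type*} [Fintype V] {G : SimpleGraph V} [DecidableRel G.Adj] {d : ℕ}
  {c : V → κ}

lemma dotProduct_mulVec_indicator_le (hc : IsImproperColoring G d c) (x : V → ℝ) (k : κ) :
    {v | c v = k}.indicator x ⬝ᵥ G.adjMatrix ℝ *ᵥ {v | c v = k}.indicator x ≤
      d * ({v | c v = k}.indicator x ⬝ᵥ {v | c v = k}.indicator x) := by
  classical
  refine G.dotProduct_mulVec_adjMatrix_le fun v hv => ?_
  have hvk : c v = k := (Set.indicator_apply_ne_zero.mp hv).1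
  calc #{w | G.Adj v w ∧ {v | c v = k}.indicator x w ≠ 0}
      ≤ #{w | G.Adj v w ∧ c w = c v} := by
        refine card_le_card fun w hw => ?_
        simp only [mem_filter, mem_univ, true_and] at hw ⊢
        exact ⟨hw.1, hvk ▸ (Set.indicator_apply_ne_zero.mp hw.2).1⟩
    _ ≤ d := by
        have := hc v
        rwa [Set.ncard_eq_toFinset_card', Set.toFinset_ofPred] at this

variable [DecidableEq V] [Fintype κ]

theorem mulVec_sub_card_smul_indicator (hc : IsImproperColoring G d c)
    (hA : (G.adjMatrix ℝ).IsHermitian) {μ μ₁ : ℝ} (hμ : ∀ i, μ ≤ hA.eigenvalues i)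
    {x : V → ℝ} (hx : G.adjMatrix ℝ *ᵥ x = μ₁ • x)
    (hhoff : μ₁ - μ = Fintype.card κ * (d - μ)) (k : κ) :
    G.adjMatrix ℝ *ᵥ (x - (Fintype.card κ : ℝ) • {v | c v = k}.indicator x) =
      μ • (x - (Fintype.card κ : ℝ) • {v | c v = k}.indicator x) := by
  classical
  set m : ℝ := (Fintype.card κ : ℝ)
  set y : κ → V → ℝ := fun j => {v | c v = j}.indicator x
  set B := G.adjMatrix ℝ - μ • 1
  have hB : B.PosSemidef := hA.posSemidef_sub_smul_one hμ
  have hQ : ∀ u, u ⬝ᵥ B *ᵥ u = u ⬝ᵥ G.adjMatrix ℝ *ᵥ u - μ * (u ⬝ᵥ u) := fun u => by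
    simp [B, sub_mulVec, dotProduct_sub, smul_mulVec, one_mulVec]
  have hxy : ∑ j, y j = x := by
    funext v
    simp [y, Finset.sum_apply, Set.indicator_apply]
  have hyy : ∑ j, y j ⬝ᵥ y j = x ⬝ᵥ x := by
    rw [← hxy, sum_dotProduct]
    refine sum_congr rfl fun j _ => ?_
    rw [hxy]
    refine sum_congr rfl fun v _ => ?_
    by_cases hv : c v = j <;> simp [y, hv]
  have hQy : ∀ j, y j ⬝ᵥ B *ᵥ y j ≤ (d - μ) * (y j ⬝ᵥ y j) := fun j => by
    rw [hQ, sub_mul]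
    linarith [hc.dotProduct_mulVec_indicator_le x j]
  have hQx : x ⬝ᵥ B *ᵥ x = m * (d - μ) * (x ⬝ᵥ x) := by
    rw [hQ, hx, dotProduct_smul, smul_eq_mul, ← sub_mul, hhoff]
  have hsum : ∑ j, (x - m • y j) ⬝ᵥ B *ᵥ (x - m • y j) ≤ 0 := by
    have hid := sum_dotProduct_mulVec_sub_card_smul B y
    rw [hxy] at hid
    have hy := sum_le_sum (s := univ) fun j _ => hQy j
    rw [← mul_sum, hyy] at hy
    calc ∑ j, (x - m • y j) ⬝ᵥ B *ᵥ (x - m • y j)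
        = m ^ 2 * ∑ j, y j ⬝ᵥ B *ᵥ y j - m * (x ⬝ᵥ B *ᵥ x) := hid
      _ ≤ m ^ 2 * ((d - μ) * (x ⬝ᵥ x)) - m * (m * (d - μ) * (x ⬝ᵥ x)) := by
        rw [hQx]
        gcongr
      _ = 0 := by ring
  have hnonneg : ∀ j, 0 ≤ (x - m • y j) ⬝ᵥ B *ᵥ (x - m • y j) := fun j => by
    simpa using hB.dotProduct_mulVec_nonneg (x - m • y j)
  have hzero : (x - m • y k) ⬝ᵥ B *ᵥ (x - m • y k) = 0 :=
    le_antisymm ((single_le_sum (fun j _ => hnonneg j) (mem_univ k)).trans hsum) (hnonneg k)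
  have := (hB.dotProduct_mulVec_zero_iff _).mp (by rwa [star_trivial])
  simpa [B, sub_mulVec, sub_eq_zero, smul_mulVec, one_mulVec] using this

theorem exists_ne_zero_of_hoffman (hc : IsImproperColoring G d c)
    (hA : (G.adjMatrix ℝ).IsHermitian) {μ μ₁ : ℝ} (hμ : ∀ i, μ ≤ hA.eigenvalues i)
    {x : V → ℝ} (hx0 : x ≠ 0) (hx : G.adjMatrix ℝ *ᵥ x = μ₁ • x) (hdμ : (d : ℝ) - μ ≠ 0)
    (hhoff : μ₁ - μ = Fintype.card κ * (d - μ)) (k : κ) : ∃ v, c v = k ∧ x v ≠ 0 := by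
  by_contra! hk
  have hy : {v | c v = k}.indicator x = 0 :=
    funext fun v => Set.indicator_apply_eq_zero.mpr (hk v)
  have hxμ := hc.mulVec_sub_card_smul_indicator hA hμ hx hhoff k
  rw [hy, smul_zero, sub_zero, hx] at hxμ
  have hμ₁ : μ₁ = μ := smul_left_injective ℝ hx0 hxμ
  have : Nonempty κ := ⟨k⟩
  have hm : (Fintype.card κ : ℝ) * (d - μ) = 0 := by rw [← hhoff, hμ₁, sub_self]
  exact Fintype.card_ne_zero (by exact_mod_cast (mul_eq_zero.mp hm).resolve_right hdμ)

theorem card_sub_one_le_card_filter_eigenvalues_eq (hc : IsImproperColoring G d c)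
    (hA : (G.adjMatrix ℝ).IsHermitian) {μ μ₁ : ℝ} (hμ : ∀ i, μ ≤ hA.eigenvalues i)
    {x : V → ℝ} (hx0 : x ≠ 0) (hx : G.adjMatrix ℝ *ᵥ x = μ₁ • x) (hdμ : (d : ℝ) - μ ≠ 0)
    (hhoff : μ₁ - μ = Fintype.card κ * (d - μ)) :
    Fintype.card κ - 1 ≤ #{i | hA.eigenvalues i = μ} := by
  classical
  cases isEmpty_or_nonempty κ
  · simp
  obtain ⟨z⟩ := ‹Nonempty κ›
  calc Fintype.card κ - 1 = Fintype.card {k // k ≠ z} := by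
        simp [Fintype.card_subtype_compl]
    _ ≤ #{i | hA.eigenvalues i = μ} :=
        hA.card_le_card_filter_eigenvalues_eq
          (linearIndependent_sub_card_smul_indicator c x
            (hc.exists_ne_zero_of_hoffman hA hμ hx0 hx hdμ hhoff) z)
          fun k => hc.mulVec_sub_card_smul_indicator hA hμ hx hhoff k

end IsImproperColoring

namespace IsEigList

variable {n : ℕ} {A : Matrix (Fin n) (Fin n) ℝ} {hA : A.IsHermitian} {lam : Fin n → ℝ}

lemma ncard_setOf_eq (hlam : IsEigList hA lam) (μ : ℝ) :
    {i | lam i = μ}.ncard = #{i | hA.eigenvalues i = μ} := by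
  obtain ⟨-, σ, rfl⟩ := hlam
  rw [Set.ncard_eq_toFinset_card', Set.toFinset_ofPred]
  exact card_equiv σ (by simp)

lemma le_eigenvalues (hlam : IsEigList hA lam) (h : n - 1 < n) (i : Fin n) :
    lam ⟨n - 1, h⟩ ≤ hA.eigenvalues i := by
  obtain ⟨hanti, σ, rfl⟩ := hlam
  simpa using hanti (show σ.symm i ≤ ⟨n - 1, h⟩ from
    Fin.le_def.mpr (Nat.le_sub_one_of_lt (σ.symm i).isLt))

lemma exists_mulVec_eq_smul (hlam : IsEigList hA lam) (j : Fin n) :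
    ∃ x ≠ 0, A *ᵥ x = lam j • x := by
  obtain ⟨-, σ, rfl⟩ := hlam
  exact ⟨_, by simpa using (hA.eigenvectorBasis).orthonormal.ne_zero (σ j),
    hA.mulVec_eigenvectorBasis (σ j)⟩

end IsEigList

end ImproperPaper

open ImproperPaper in

theorem stmt_1 {n : ℕ} (hn : 1 ≤ n) (G : SimpleGraph (Fin n)) [DecidableRel G.Adj]
    (d m : ℕ)
    (hA : (G.adjMatrix ℝ).IsHermitian) (lam : Fin n → ℝ) (hlam : IsEigList hA lam)
    (hm : improperChromaticNumber G d = m)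
    (heq : (m : ℝ) =
      (lam ⟨0, by omega⟩ - lam ⟨n - 1, by omega⟩) / ((d : ℝ) - lam ⟨n - 1, by omega⟩)) :
    m - 1 ≤ ({i : Fin n | lam i = lam ⟨n - 1, by omega⟩} : Set (Fin n)).ncard := by
  set μ := lam ⟨n - 1, by omega⟩
  by_cases hdμ : (d : ℝ) - μ = 0
  · have hm0 : m = 0 := by
      rw [hdμ, div_zero] at heq
      exact_mod_cast heq
    simp [hm0]
  obtain ⟨c, hc⟩ := hm ▸ exists_improperColoring_improperChromaticNumber G d
  obtain ⟨x, hx0, hx⟩ := hlam.exists_mulVec_eq_smul ⟨0, by omega⟩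
  have hhoff : lam ⟨0, by omega⟩ - μ = Fintype.card (Fin m) * (d - μ) := by
    rw [Fintype.card_fin, heq, div_mul_cancel₀ _ hdμ]
  rw [hlam.ncard_setOf_eq]
  simpa using hc.card_sub_one_le_card_filter_eigenvalues_eq hA (hlam.le_eigenvalues _) hx0 hx
    hdμ hhoff
end

section
/- For every finite simple graph G and every positive integer t, the fractional chromatic number of G equals the fractional t-clustered chromatic number of the strong product of G with K_t: χ_f(G) = χ_f^{\underline{t}}(G ⊠ K_t). -/
open SimpleGraph Finset Matrix

/-! Lifting a proper `b`-fold colouring of `G` along the projection `G ⊠ K_t → G` gives a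
`t`-clustered one, since each monochromatic component stays inside a fibre `{v} × K_t`.
Conversely, take a `t`-clustered `b`-fold colouring `c` of `G ⊠ K_t` with `n` colours and, for
each colour `x`, a map `f x` into `Fin t` that is injective on every monochromatic component of
colour `x`. Giving `v` the colours `(x, f x (v, i))` for `x ∈ c (v, i)` is a proper `tb`-fold
colouring of `G` with `nt` colours: the `x`-coloured vertices of a fibre form a clique, hence lie
in one component, and so do those of two adjacent fibres. Thus
`χ_{tb}(G) / tb ≤ χ^t_b(G ⊠ K_t) / b ≤ χ_b(G) / b`. -/

open ImproperPaper Relation Function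

theorem Setoid.exists_fin_injective_on_classes {α : Type*} [Finite α] (s : Setoid α) {t : ℕ}
    (h : ∀ a, {b | s a b}.ncard ≤ t) : ∃ f : α → Fin t, ∀ a b, s a b → f a = f b → a = b := by
  classical
  have := Fintype.ofFinite α
  have hclass (q : Quotient s) : Nonempty ({a // ⟦a⟧ = q} ↪ Fin t) := by
    induction q using Quotient.inductionOn with
    | h a =>
      refine Function.Embedding.nonempty_of_card_le ?_
      rw [Fintype.card_fin, ← Nat.card_eq_fintype_card]
      refine le_of_eq_of_le ?_ (h a)
      rw [← Nat.card_coe_set_eq]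
      exact Nat.card_congr (Equiv.subtypeEquivRight fun b => Quotient.eq.trans ⟨s.symm, s.symm⟩)
  let g q := (hclass q).some
  have hg (q : Quotient s) (b : α) (hb : ⟦b⟧ = q) : g ⟦b⟧ ⟨b, rfl⟩ = g q ⟨b, hb⟩ := by
    subst hb; rfl
  refine ⟨fun a => g ⟦a⟧ ⟨a, rfl⟩, fun a b hab hgab => ?_⟩
  dsimp only at hgab
  rw [hg _ b (Quotient.sound hab).symm] at hgab
  exact congrArg Subtype.val ((g _).injective hgab)

namespace ImproperPaper

variable {U V : Type*}

theorem exists_pairwise_disjoint_card_eq [Fintype U] (b : ℕ) :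
    ∃ c : U → Finset (Fin (Fintype.card U * b)), (∀ u, (c u).card = b) ∧
      Pairwise fun u u' => Disjoint (c u) (c u') := by
  let e := Fintype.equivFin U
  refine ⟨fun u => univ.map ⟨fun j => finProdFinEquiv (e u, j), fun j j' h => by simpa using h⟩,
    fun u => by simp, fun u u' huu' => ?_⟩
  simp only [Finset.disjoint_left, Finset.mem_map]
  rintro _ ⟨j, -, rfl⟩ ⟨j', -, h⟩
  exact huu' (e.injective (congrArg Prod.fst (finProdFinEquiv.injective h)).symm)

theorem forall_ncard_adj_mem_le_zero_iff [Finite V] {G : SimpleGraph V} {n : ℕ}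
    {c : V → Finset (Fin n)} :
    (∀ v, ∀ x ∈ c v, ({w | G.Adj v w ∧ x ∈ c w} : Set V).ncard ≤ 0) ↔
      ∀ v w, G.Adj v w → Disjoint (c v) (c w) := by
  simp only [Nat.le_zero, Set.ncard_eq_zero (Set.toFinite _), Set.eq_empty_iff_forall_notMem,
    Set.mem_ofPred_eq, not_and, Finset.disjoint_left]
  exact ⟨fun h v w hvw x hv hw => h v x hv w hvw hw, fun h v x hv w hvw hw => h v w hvw hv hw⟩

theorem bFoldChromaticNumber_le [Finite V] {G : SimpleGraph V} {b n : ℕ}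
    (c : V → Finset (Fin n)) (hcard : ∀ v, (c v).card = b)
    (hc : ∀ v w, G.Adj v w → Disjoint (c v) (c w)) : bFoldChromaticNumber G b ≤ n :=
  Nat.sInf_le ⟨c, hcard, forall_ncard_adj_mem_le_zero_iff.2 hc⟩

theorem exists_bFoldChromaticNumber_coloring [Fintype V] (G : SimpleGraph V) (b : ℕ) :
    ∃ c : V → Finset (Fin (bFoldChromaticNumber G b)), (∀ v, (c v).card = b) ∧
      ∀ v w, G.Adj v w → Disjoint (c v) (c w) := by
  obtain ⟨c, hcard, hc⟩ := exists_pairwise_disjoint_card_eq (U := V) b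
  have hmem : bFoldChromaticNumber G b ∈ {n | ∃ c : V → Finset (Fin n), (∀ v, (c v).card = b) ∧
      ∀ v, ∀ x ∈ c v, ({w | G.Adj v w ∧ x ∈ c w} : Set V).ncard ≤ 0} :=
    Nat.sInf_mem ⟨_, c, hcard, forall_ncard_adj_mem_le_zero_iff.2 fun v w h => hc h.ne⟩
  obtain ⟨c, hcard, hc⟩ := hmem
  exact ⟨c, hcard, forall_ncard_adj_mem_le_zero_iff.1 hc⟩

def monoAdj (H : SimpleGraph U) {n : ℕ} (c : U → Finset (Fin n)) (x : Fin n) (a b : U) : Prop :=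
  H.Adj a b ∧ x ∈ c a ∧ x ∈ c b

instance {H : SimpleGraph U} {n : ℕ} {c : U → Finset (Fin n)} {x : Fin n} :
    Std.Symm (monoAdj H c x) :=
  ⟨fun _ _ h => ⟨h.1.symm, h.2.2, h.2.1⟩⟩

def IsBFoldClustered (H : SimpleGraph U) (t : ℕ) {n : ℕ} (c : U → Finset (Fin n)) : Prop :=
  ∀ x v, x ∈ c v → {w | ReflTransGen (monoAdj H c x) v w}.ncard ≤ t

theorem bFoldClusteredChromaticNumber_le {H : SimpleGraph U} {b t n : ℕ}
    (c : U → Finset (Fin n)) (hcard : ∀ u, (c u).card = b) (hc : IsBFoldClustered H t c) :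
    bFoldClusteredChromaticNumber H b t ≤ n :=
  Nat.sInf_le ⟨c, hcard, hc⟩

theorem IsBFoldClustered.exists_fin_injective_on_classes [Finite U] {H : SimpleGraph U}
    {t n : ℕ} {c : U → Finset (Fin n)} (hc : IsBFoldClustered H t c) (ht : 0 < t) (x : Fin n) :
    ∃ f : U → Fin t, ∀ a b, ReflTransGen (monoAdj H c x) a b → f a = f b → a = b := by
  refine (Setoid.mk _ ⟨fun _ => .refl, fun h => symm h, .trans⟩).exists_fin_injective_on_classes
    fun a => ?_
  by_cases ha : x ∈ c a
  · exact hc x a ha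
  · have : {b | ReflTransGen (monoAdj H c x) a b} = {a} :=
      Set.ext fun b => reflTransGen_iff_eq fun b hab => ha hab.2.1
    simpa [this, Nat.one_le_iff_ne_zero] using ht.ne'

theorem strongProd_top_adj {G : SimpleGraph V} {t : ℕ} {p q : V × Fin t} :
    (strongProd G ⊤).Adj p q ↔ p ≠ q ∧ (p.1 = q.1 ∨ G.Adj p.1 q.1) := by
  obtain ⟨v, i⟩ := p
  obtain ⟨w, j⟩ := q
  simp only [strongProd, top_adj, ne_eq, Prod.mk.injEq]
  have := G.ne_of_adj (a := v) (b := w)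
  tauto

theorem isBFoldClustered_comp_fst {G : SimpleGraph V} {t n : ℕ} {c : V → Finset (Fin n)}
    (hc : ∀ v w, G.Adj v w → Disjoint (c v) (c w)) :
    IsBFoldClustered (strongProd G (⊤ : SimpleGraph (Fin t))) t (fun p => c p.1) := by
  intro x p _
  have hstep : monoAdj (strongProd G (⊤ : SimpleGraph (Fin t))) (fun p => c p.1) x ≤
      (Eq on Prod.fst) := by
    rintro a b ⟨hab, ha, hb⟩
    exact (strongProd_top_adj.1 hab).2.resolve_right fun h =>
      Finset.disjoint_left.1 (hc _ _ h) ha hb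
  have hfst (q : V × Fin t)
      (hq : ReflTransGen (monoAdj (strongProd G ⊤) (fun p => c p.1) x) p q) : q.1 = p.1 := by
    simpa [reflTransGen_eq_self, eq_comm] using hq.lift Prod.fst hstep
  calc _ ≤ (Set.univ : Set (Fin t)).ncard :=
        Set.ncard_le_ncard_of_injOn Prod.snd (fun _ _ => Set.mem_univ _)
          fun a ha b hb h => Prod.ext ((hfst a ha).trans (hfst b hb).symm) h
    _ = t := by simp [Set.ncard_univ]

theorem bFoldClusteredChromaticNumber_strongProd_top_le [Fintype V] (G : SimpleGraph V)
    (b t : ℕ) :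
    bFoldClusteredChromaticNumber (strongProd G (⊤ : SimpleGraph (Fin t))) b t ≤
      bFoldChromaticNumber G b := by
  obtain ⟨c, hcard, hc⟩ := exists_bFoldChromaticNumber_coloring G b
  exact bFoldClusteredChromaticNumber_le _ (fun p => hcard p.1) (isBFoldClustered_comp_fst hc)

section Recolour

variable {G : SimpleGraph V} {t n : ℕ} {c : V × Fin t → Finset (Fin n)}
  {f : Fin n → V × Fin t → Fin t}

def recolour (c : V × Fin t → Finset (Fin n)) (f : Fin n → V × Fin t → Fin t) (v : V) :
    Finset (Fin n × Fin t) :=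
  univ.biUnion fun i => (c (v, i)).image fun x => (x, f x (v, i))

theorem mem_recolour {v : V} {q : Fin n × Fin t} :
    q ∈ recolour c f v ↔ ∃ i, q.1 ∈ c (v, i) ∧ f q.1 (v, i) = q.2 := by
  simp [recolour, Prod.ext_iff]

theorem card_recolour
    (hf : ∀ x p q, ReflTransGen (monoAdj (strongProd G ⊤) c x) p q → f x p = f x q → p = q)
    {b : ℕ} (hcard : ∀ p, (c p).card = b) (v : V) :
    (recolour c f v).card = t * b := by
  rw [recolour, card_biUnion]
  · simp [card_image_of_injective _ (fun _ _ h => (Prod.mk.inj h).1), hcard]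
  · intro i _ j _ hij
    simp only [onFun, Finset.disjoint_left, mem_image]
    rintro _ ⟨x, hx, rfl⟩ ⟨y, hy, hxy⟩
    obtain ⟨rfl, h⟩ := Prod.mk.inj hxy
    have hadj : (strongProd G ⊤).Adj (v, j) (v, i) :=
      strongProd_top_adj.2 ⟨by simpa using hij.symm, Or.inl rfl⟩
    exact hij (congrArg Prod.snd (hf _ _ _ (.single ⟨hadj, hy, hx⟩) h)).symm

theorem disjoint_recolour
    (hf : ∀ x p q, ReflTransGen (monoAdj (strongProd G ⊤) c x) p q → f x p = f x q → p = q)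
    {v w : V} (hvw : G.Adj v w) :
    Disjoint (recolour c f v) (recolour c f w) := by
  refine Finset.disjoint_left.2 fun q hv hw => ?_
  obtain ⟨i, hi, hfi⟩ := mem_recolour.1 hv
  obtain ⟨j, hj, hfj⟩ := mem_recolour.1 hw
  have hadj : (strongProd G ⊤).Adj (v, i) (w, j) :=
    strongProd_top_adj.2 ⟨fun h => hvw.ne (congrArg Prod.fst h), Or.inr hvw⟩
  exact hvw.ne (congrArg Prod.fst (hf _ _ _ (.single ⟨hadj, hi, hj⟩) (hfi.trans hfj.symm)))

end Recolour

theorem bFoldChromaticNumber_mul_le [Fintype V] (G : SimpleGraph V) {t : ℕ} (ht : 0 < t)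
    (b : ℕ) :
    bFoldChromaticNumber G (t * b) ≤
      bFoldClusteredChromaticNumber (strongProd G (⊤ : SimpleGraph (Fin t))) b t * t := by
  obtain ⟨c₀, hcard₀, hc₀⟩ := exists_bFoldChromaticNumber_coloring G b
  have hmem : bFoldClusteredChromaticNumber (strongProd G ⊤) b t ∈ {n | ∃ c : V × Fin t →
      Finset (Fin n), (∀ p, (c p).card = b) ∧ IsBFoldClustered (strongProd G ⊤) t c} :=
    Nat.sInf_mem ⟨_, fun p => c₀ p.1, fun p => hcard₀ p.1, isBFoldClustered_comp_fst hc₀⟩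
  obtain ⟨c, hcard, hc⟩ := hmem
  choose f hf using hc.exists_fin_injective_on_classes ht
  refine bFoldChromaticNumber_le (fun v => (recolour c f v).map finProdFinEquiv.toEmbedding)
    (fun v => by rw [card_map, card_recolour hf hcard]) fun v w hvw => ?_
  rw [disjoint_map]
  exact disjoint_recolour hf hvw

noncomputable def infRatio (A : ℕ → ℕ) : ℝ :=
  sInf {x : ℝ | ∃ b : ℕ, 0 < b ∧ x = (A b : ℝ) / b}

theorem infRatio_le_infRatio {A B : ℕ → ℕ}
    (h : ∀ b, 0 < b → ∃ b', 0 < b' ∧ (A b' : ℝ) / b' ≤ B b / b) : infRatio A ≤ infRatio B := by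
  refine le_csInf ⟨_, 1, one_pos, rfl⟩ ?_
  rintro _ ⟨b, hb, rfl⟩
  obtain ⟨b', hb', hle⟩ := h b hb
  have hbdd : BddBelow {x : ℝ | ∃ b : ℕ, 0 < b ∧ x = (A b : ℝ) / b} :=
    ⟨0, by rintro _ ⟨b, -, rfl⟩; positivity⟩
  exact (csInf_le hbdd ⟨b', hb', rfl⟩).trans hle

end ImproperPaper

open ImproperPaper in

theorem stmt_6 {V : Type*} [Fintype V] (G : SimpleGraph V) (t : ℕ) (ht : 0 < t) :
    fracChromaticNumber G =
      fracClusteredChromaticNumber (strongProd G (⊤ : SimpleGraph (Fin t))) t := by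
  change infRatio (bFoldChromaticNumber G) =
    infRatio fun b => bFoldClusteredChromaticNumber (strongProd G (⊤ : SimpleGraph (Fin t))) b t
  refine le_antisymm (infRatio_le_infRatio fun b hb => ⟨t * b, Nat.mul_pos ht hb, ?_⟩)
    (infRatio_le_infRatio fun b hb => ⟨b, hb, ?_⟩)
  · have hmul : (bFoldChromaticNumber G (t * b) : ℝ) ≤
        bFoldClusteredChromaticNumber (strongProd G (⊤ : SimpleGraph (Fin t))) b t * t := by
      exact_mod_cast bFoldChromaticNumber_mul_le G ht b
    calc (bFoldChromaticNumber G (t * b) : ℝ) / ↑(t * b)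
        ≤ bFoldClusteredChromaticNumber (strongProd G (⊤ : SimpleGraph (Fin t))) b t * t /
            ↑(t * b) := by gcongr
      _ = _ := by push_cast; field_simp
  · gcongr
    exact_mod_cast bFoldClusteredChromaticNumber_strongProd_top_le G b t
end
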